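/- arXiv:2507.22778 — 2 statements merged into one kernel-verified Lean document; each statement's English description precedes it below -/
import Mathlib

section
/- Let J be a real square matrix such that J + Jᵀ is negative definite, and let X ≻ 0 be the unique symmetric solution of the Lyapunov equation Jᵀ X + X J = -I. Then λ_max(X) ≤ 1 / |λ_max(J + Jᵀ)|. -/
/-!
Let `v` be a unit eigenvector of `X` for `λ := λ_max X`. Testing the Lyapunov equation against
`v` and using the symmetry of `X` gives `λ · vᵀ (J + Jᵀ) v = -1`, while the Rayleigh quotient
bound gives `vᵀ (J + Jᵀ) v ≤ μ := λ_max (J + Jᵀ) < 0`. Hence `-1 ≤ λ μ`, i.e.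
`λ ≤ 1 / |μ|`.
-/

open Matrix

namespace Matrix

variable {m : Type*} [Fintype m]

lemma dotProduct_lyapunov_mulVec_of_eigenvector {R : Type*} [CommRing R] {J X : Matrix m m R}
    (hX : Xᵀ = X) {v : m → R} {c : R} (hv : X *ᵥ v = c • v) :
    v ⬝ᵥ (Jᵀ * X + X * J) *ᵥ v = c * (v ⬝ᵥ (J + Jᵀ) *ᵥ v) := by
  have hvX : v ᵥ* X = c • v := by rw [← mulVec_transpose, hX, hv]
  rw [add_mulVec, add_mulVec, ← mulVec_mulVec, ← mulVec_mulVec, dotProduct_add, dotProduct_add,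
    hv, dotProduct_mulVec v X, hvX, mulVec_smul]
  simp only [dotProduct_smul, smul_dotProduct, smul_eq_mul]
  ring

variable [DecidableEq m]

section RCLike

open scoped MatrixOrder

variable {𝕜 : Type*} [RCLike 𝕜] {A : Matrix m m 𝕜}

lemma IsHermitian.le_smul_one_iSup_eigenvalues (hA : A.IsHermitian) :
    A ≤ (⨆ i, hA.eigenvalues i) • (1 : Matrix m m 𝕜) := by
  rw [← Algebra.algebraMap_eq_smul_one]
  refine le_algebraMap_of_spectrum_le fun x hx => ?_
  rw [hA.spectrum_real_eq_range_eigenvalues] at hx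
  obtain ⟨i, rfl⟩ := hx
  exact le_ciSup (Set.finite_range _).bddAbove i

lemma IsHermitian.star_dotProduct_eigenvectorBasis_self (hA : A.IsHermitian) (i : m) :
    star ⇑(hA.eigenvectorBasis i) ⬝ᵥ ⇑(hA.eigenvectorBasis i) = 1 := by
  rw [dotProduct_comm, ← EuclideanSpace.inner_eq_star_dotProduct, inner_self_eq_norm_sq_to_K,
    hA.eigenvectorBasis.orthonormal.1 i]
  simp

end RCLike

variable {A : Matrix m m ℝ}

lemma IsHermitian.dotProduct_mulVec_le_iSup_eigenvalues (hA : A.IsHermitian) (v : m → ℝ) :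
    v ⬝ᵥ A *ᵥ v ≤ (⨆ i, hA.eigenvalues i) * (v ⬝ᵥ v) := by
  have := hA.le_smul_one_iSup_eigenvalues.dotProduct_mulVec_nonneg v
  simp only [star_trivial, sub_mulVec, smul_mulVec, one_mulVec, dotProduct_sub, dotProduct_smul,
    smul_eq_mul] at this
  linarith

lemma IsHermitian.eigenvalues_neg_of_posDef_neg (hA : A.IsHermitian) (hneg : (-A).PosDef)
    (i : m) : hA.eigenvalues i < 0 := by
  have hv : (⇑(hA.eigenvectorBasis i) : m → ℝ) ≠ 0 := fun h =>
    hA.eigenvectorBasis.orthonormal.ne_zero i ((WithLp.ofLp_eq_zero (p := 2)).mp h)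
  have := hneg.dotProduct_mulVec_pos hv
  rw [neg_mulVec, dotProduct_neg, neg_pos] at this
  simpa [hA.eigenvalues_eq i] using this

end Matrix

/-- If `J + Jᵀ` is negative definite and `X ≻ 0` solves the Lyapunov equation
`Jᵀ X + X J = -I`, then `λ_max X ≤ 1 / |λ_max (J + Jᵀ)|`. -/
theorem stmt_1 {n : ℕ} [NeZero n] (J X : Matrix (Fin n) (Fin n) ℝ)
    (hH : (J + J.transpose).IsHermitian)
    (hneg : (-(J + J.transpose)).PosDef)
    (hX : X.PosDef)
    (hlyap : J.transpose * X + X * J = -1) :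
    (⨆ i, hX.1.eigenvalues i) ≤ 1 / |⨆ i, hH.eigenvalues i| := by
  obtain ⟨i, hi⟩ := exists_eq_ciSup_of_finite (f := hX.1.eigenvalues)
  obtain ⟨k, hk⟩ := exists_eq_ciSup_of_finite (f := hH.eigenvalues)
  have hμ : (⨆ i, hH.eigenvalues i) < 0 := hk ▸ hH.eigenvalues_neg_of_posDef_neg hneg k
  set v : Fin n → ℝ := ⇑(hX.1.eigenvectorBasis i)
  have hv : v ⬝ᵥ v = 1 := by simpa using hX.1.star_dotProduct_eigenvectorBasis_self i
  have hlam : hX.1.eigenvalues i * (v ⬝ᵥ (J + Jᵀ) *ᵥ v) = -1 := by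
    rw [← dotProduct_lyapunov_mulVec_of_eigenvector (J := J) (X := X) hX.1
      (hX.1.mulVec_eigenvectorBasis i), hlyap, neg_mulVec, one_mulVec, dotProduct_neg, hv]
  have hq := hH.dotProduct_mulVec_le_iSup_eigenvalues v
  rw [hv, mul_one] at hq
  rw [← hi, abs_of_neg hμ, le_div_iff₀ (neg_pos.mpr hμ)]
  nlinarith [hX.eigenvalues_pos i]
end

section
/- Let J be a real square matrix and γ > 0 a scalar. If λ_max(J + Jᵀ) < -2γ and X ≻ 0 solves Jᵀ X + X J = -I, then 1/λ_max(X) - 2γ > 0. -/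
/-!
Let `μ = λ_max(X)` and `v` a unit eigenvector of `X` for `μ`. Since `X` is symmetric, evaluating
the Lyapunov equation on `v` gives `-1 = μ vᵀ(J + Jᵀ)v ≤ μ λ_max(J + Jᵀ) < -2γμ`, i.e. `2γμ < 1`.
-/

open Matrix
open scoped MatrixOrder

variable {ι : Type*} [Fintype ι]

theorem Matrix.dotProduct_lyapunov_mulVec_of_mulVec_eq_smul {J X : Matrix ι ι ℝ}
    (hX : X.IsHermitian) {v : ι → ℝ} {μ : ℝ} (hv : X *ᵥ v = μ • v) :
    v ⬝ᵥ ((Jᵀ * X + X * J) *ᵥ v) = μ * (v ⬝ᵥ ((J + Jᵀ) *ᵥ v)) := by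
  have hXv : v ᵥ* X = μ • v := by
    rw [← mulVec_transpose, ← conjTranspose_eq_transpose_of_trivial, hX.eq, hv]
  simp only [add_mulVec, dotProduct_add, ← mulVec_mulVec, hv, mulVec_smul, dotProduct_smul,
    dotProduct_mulVec v X, hXv, smul_dotProduct, smul_eq_mul, mulVec_transpose,
    dotProduct_comm v (v ᵥ* J)]
  ring

variable [DecidableEq ι]

namespace Matrix.IsHermitian

theorem le_iSup_eigenvalues_smul_one {A : Matrix ι ι ℝ} (hA : A.IsHermitian) :
    A ≤ (⨆ i, hA.eigenvalues i) • (1 : Matrix ι ι ℝ) := by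
  rw [← Algebra.algebraMap_eq_smul_one]
  refine le_algebraMap_of_spectrum_le fun x hx => ?_
  rw [hA.spectrum_real_eq_range_eigenvalues] at hx
  obtain ⟨i, rfl⟩ := hx
  exact le_ciSup (Finite.bddAbove_range _) i

theorem dotProduct_mulVec_le_iSup_eigenvalues_mul {A : Matrix ι ι ℝ} (hA : A.IsHermitian)
    (v : ι → ℝ) : v ⬝ᵥ (A *ᵥ v) ≤ (⨆ i, hA.eigenvalues i) * (v ⬝ᵥ v) := by
  have := hA.le_iSup_eigenvalues_smul_one.dotProduct_mulVec_nonneg v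
  simp only [star_trivial, sub_mulVec, smul_mulVec, one_mulVec, dotProduct_sub, dotProduct_smul,
    smul_eq_mul] at this
  linarith

theorem exists_mulVec_eq_iSup_eigenvalues_smul [Nonempty ι] {A : Matrix ι ι ℝ}
    (hA : A.IsHermitian) : ∃ v : ι → ℝ, A *ᵥ v = (⨆ i, hA.eigenvalues i) • v ∧ v ⬝ᵥ v = 1 := by
  obtain ⟨i, hi⟩ := Finite.exists_max hA.eigenvalues
  have hmax : (⨆ j, hA.eigenvalues j) = hA.eigenvalues i :=
    le_antisymm (ciSup_le hi) (le_ciSup (Finite.bddAbove_range _) i)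
  refine ⟨hA.eigenvectorBasis i, hmax ▸ hA.mulVec_eigenvectorBasis i, ?_⟩
  have := real_inner_self_eq_norm_sq (hA.eigenvectorBasis i)
  rwa [hA.eigenvectorBasis.orthonormal.1 i, one_pow, EuclideanSpace.inner_eq_star_dotProduct,
    star_trivial] at this

end Matrix.IsHermitian

theorem Matrix.neg_one_le_iSup_eigenvalues_mul_iSup_eigenvalues_of_lyapunov [Nonempty ι]
    {J X : Matrix ι ι ℝ} (hH : (J + Jᵀ).IsHermitian) (hX : X.PosSemidef)
    (hlyap : Jᵀ * X + X * J = -1) :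
    -1 ≤ (⨆ i, hX.1.eigenvalues i) * ⨆ i, hH.eigenvalues i := by
  obtain ⟨v, hv, hvv⟩ := hX.1.exists_mulVec_eq_iSup_eigenvalues_smul
  have hμ : 0 ≤ ⨆ i, hX.1.eigenvalues i := Real.iSup_nonneg hX.eigenvalues_nonneg
  calc (-1 : ℝ) = v ⬝ᵥ ((Jᵀ * X + X * J) *ᵥ v) := by simp [hlyap, neg_mulVec, hvv]
    _ = (⨆ i, hX.1.eigenvalues i) * (v ⬝ᵥ ((J + Jᵀ) *ᵥ v)) :=
      dotProduct_lyapunov_mulVec_of_mulVec_eq_smul hX.1 hv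
    _ ≤ (⨆ i, hX.1.eigenvalues i) * ⨆ i, hH.eigenvalues i := by
      gcongr
      simpa [hvv] using hH.dotProduct_mulVec_le_iSup_eigenvalues_mul v

theorem stmt_2_general {n : ℕ} [NeZero n] (J X : Matrix (Fin n) (Fin n) ℝ) (γ : ℝ)
    (hH : (J + J.transpose).IsHermitian)
    (hbound : (⨆ i, hH.eigenvalues i) < -2 * γ)
    (hX : X.PosDef)
    (hlyap : J.transpose * X + X * J = -1) :
    0 < 1 / (⨆ i, hX.1.eigenvalues i) - 2 * γ := by
  have hμ : 0 < ⨆ i, hX.1.eigenvalues i :=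
    (hX.eigenvalues_pos 0).trans_le (le_ciSup (Finite.bddAbove_range _) 0)
  have hkey :=
    neg_one_le_iSup_eigenvalues_mul_iSup_eigenvalues_of_lyapunov hH hX.posSemidef hlyap
  rw [sub_pos, lt_div_iff₀ hμ]
  nlinarith

/-- If `λ_max (J + Jᵀ) < -2γ` with `γ > 0` and `X ≻ 0` solves `Jᵀ X + X J = -I`,
then `1 / λ_max X - 2γ > 0`. -/
theorem stmt_2 {n : ℕ} [NeZero n] (J X : Matrix (Fin n) (Fin n) ℝ) (γ : ℝ) (hγ : 0 < γ)
    (hH : (J + J.transpose).IsHermitian)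
    (hbound : (⨆ i, hH.eigenvalues i) < -2 * γ)
    (hX : X.PosDef)
    (hlyap : J.transpose * X + X * J = -1) :
    0 < 1 / (⨆ i, hX.1.eigenvalues i) - 2 * γ :=
  stmt_2_general J X γ hH hbound hX hlyap
end
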